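/- (Trace inequality) Let a ∈ (−1,1) and n ≥ 1. There exists a constant C₀ = C₀(n,a) > 0 such that for every smooth function f with compact support in the closed upper half-space ℝⁿ × [0,∞) and every σ > 1, one has ∫_{ℝⁿ} f(x,0)² dx ≤ C₀ ( σ^{1+a} ∫_{ℝ^{n+1}_+} f(X)² y^a dX + σ^{a−1} ∫_{ℝ^{n+1}_+} |∇f(X)|² y^a dX ). -/

import Mathlib

open MeasureTheory Real Set

/-- Partial derivative in the `i`-th coordinate direction. -/
noncomputable def pd {m : ℕ} (i : Fin m) (g : (Fin m → ℝ) → ℝ) (X : Fin m → ℝ) : ℝ :=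
  fderiv ℝ g X (Pi.single i 1)



lemma sq_integral_mul_le {α : Type*} [MeasurableSpace α] {μ : Measure α} {u v : α → ℝ}
    (hu : MemLp u 2 μ) (hv : MemLp v 2 μ) :
    (∫ t, ‖u t‖ * ‖v t‖ ∂μ) ^ 2 ≤ (∫ t, u t ^ 2 ∂μ) * (∫ t, v t ^ 2 ∂μ) := by
  have hconj : Real.HolderConjugate 2 2 := by rw [Real.holderConjugate_iff]; norm_num
  have h2 : (ENNReal.ofReal (2:ℝ)) = 2 := by norm_num
  have h := integral_mul_norm_le_Lp_mul_Lq (μ := μ) hconj (h2 ▸ hu) (h2 ▸ hv)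
  have hnorm : ∀ w : α → ℝ, (∫ t, ‖w t‖ ^ (2:ℝ) ∂μ) = ∫ t, w t ^ 2 ∂μ := by
    intro w
    refine integral_congr_ae (Filter.Eventually.of_forall fun t => ?_)
    show ‖w t‖ ^ (2:ℝ) = w t ^ 2
    rw [show (2:ℝ) = ((2:ℕ):ℝ) by norm_num, Real.rpow_natCast]
    simp [sq_abs]
  rw [hnorm u, hnorm v] at h
  have h1 : (0:ℝ) ≤ ∫ t, ‖u t‖ * ‖v t‖ ∂μ :=
    integral_nonneg fun t => mul_nonneg (norm_nonneg _) (norm_nonneg _)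
  have hu0 : (0:ℝ) ≤ ∫ t, u t ^ 2 ∂μ := integral_nonneg fun t => sq_nonneg _
  have hv0 : (0:ℝ) ≤ ∫ t, v t ^ 2 ∂μ := integral_nonneg fun t => sq_nonneg _
  calc (∫ t, ‖u t‖ * ‖v t‖ ∂μ) ^ 2
      ≤ ((∫ t, u t ^ 2 ∂μ) ^ (1/(2:ℝ)) * (∫ t, v t ^ 2 ∂μ) ^ (1/(2:ℝ))) ^ 2 :=
        pow_le_pow_left₀ h1 h 2
    _ = (∫ t, u t ^ 2 ∂μ) * (∫ t, v t ^ 2 ∂μ) := by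
        rw [mul_pow, ← Real.rpow_natCast (_ ^ (1/(2:ℝ))) 2, ← Real.rpow_natCast (_ ^ (1/(2:ℝ))) 2,
          ← Real.rpow_mul hu0, ← Real.rpow_mul hv0]
        norm_num

lemma my_measurable_rpow_const (a : ℝ) : Measurable fun x : ℝ => x ^ a := by
  measurability

lemma integrableOn_cont_mul_rpow {a : ℝ} (ha1 : -1 < a) {h : ℝ → ℝ} (hh : Continuous h)
    {δ : ℝ} (hδ : 0 < δ) : IntegrableOn (fun y => h y * y ^ a) (Ioo 0 δ) := by
  obtain ⟨C, hC⟩ :=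
    (isCompact_Icc (a := (0:ℝ)) (b := δ)).exists_bound_of_continuousOn hh.continuousOn
  have hw : IntegrableOn (fun y : ℝ => y ^ a) (Ioo 0 δ) :=
    ((intervalIntegral.intervalIntegrable_rpow' (a := 0) (b := δ) ha1).1).mono_set
      Ioo_subset_Ioc_self
  refine Integrable.mono (hw.const_mul C) ?_ ?_
  · exact (hh.aestronglyMeasurable).mul
      (Measurable.aestronglyMeasurable (by measurability))
  · filter_upwards [ae_restrict_mem measurableSet_Ioo] with y hy
    have hya : (0:ℝ) ≤ y ^ a := Real.rpow_nonneg hy.1.le a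
    have hCy : ‖h y‖ ≤ C := hC y ⟨hy.1.le, hy.2.le⟩
    have hC0 : 0 ≤ C := le_trans (norm_nonneg _) hCy
    rw [norm_mul, Real.norm_eq_abs (y ^ a), abs_of_nonneg hya, norm_mul,
      Real.norm_eq_abs C, abs_of_nonneg hC0, Real.norm_eq_abs (y ^ a), abs_of_nonneg hya]
    exact mul_le_mul_of_nonneg_right hCy hya

lemma integral_Ioo_rpow {r : ℝ} (hr : -1 < r) {y : ℝ} (hy : 0 < y) :
    ∫ t in Ioo (0:ℝ) y, t ^ r = y ^ (r+1) / (r+1) := by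
  rw [← integral_Ioc_eq_integral_Ioo, ← intervalIntegral.integral_of_le hy.le,
    integral_rpow (Or.inl hr), Real.zero_rpow (by linarith : r + 1 ≠ 0), sub_zero]

set_option maxHeartbeats 1000000 in
lemma oneD {a : ℝ} (ha1 : -1 < a) (ha2 : a < 1) {g : ℝ → ℝ}
    (hg : ContDiff ℝ (⊤ : ℕ∞) g) {δ : ℝ} (hδ : 0 < δ) :
    g 0 ^ 2 ≤ (2*(1+a)) * δ ^ (-(1+a)) * (∫ y in Ioo (0:ℝ) δ, g y ^ 2 * y ^ a)
      + ((1+a)/(1-a)) * δ ^ (1-a) * (∫ y in Ioo (0:ℝ) δ, (deriv g y) ^ 2 * y ^ a) := by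
  have h1a : (0:ℝ) < 1 + a := by linarith
  have h1a' : (0:ℝ) < 1 - a := by linarith
  have hgc : Continuous g := hg.continuous
  have hg'c : Continuous (deriv g) := hg.continuous_deriv (by simp)
  set G := ∫ t in Ioo (0:ℝ) δ, (deriv g t) ^ 2 * t ^ a with hGdef
  have hG0 : 0 ≤ G := setIntegral_nonneg measurableSet_Ioo fun t ht =>
    mul_nonneg (sq_nonneg _) (Real.rpow_nonneg ht.1.le _)
  have hGint : IntegrableOn (fun t : ℝ => (deriv g t) ^ 2 * t ^ a) (Ioo 0 δ) :=
    integrableOn_cont_mul_rpow ha1 (hg'c.pow 2) hδ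
  -- pointwise key estimate
  have key : ∀ y ∈ Ioo (0:ℝ) δ, g 0 ^ 2 ≤ 2 * g y ^ 2 + (2/(1-a)) * y ^ (1-a) * G := by
    intro y hy
    have hy0 : (0:ℝ) < y := hy.1
    have hftc : ∫ t in (0:ℝ)..y, deriv g t = g y - g 0 :=
      intervalIntegral.integral_deriv_eq_sub
        (fun t _ => (hg.differentiable (by simp)).differentiableAt)
        ((hg'c).intervalIntegrable 0 y)
    set μ := volume.restrict (Ioo (0:ℝ) y) with hμ
    set u : ℝ → ℝ := fun t => t ^ (-(a/2)) with hu_def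
    set v : ℝ → ℝ := fun t => |deriv g t| * t ^ (a/2) with hv_def
    have haeIoo : ∀ᵐ t ∂μ, t ∈ Ioo (0:ℝ) y := ae_restrict_mem measurableSet_Ioo
    -- MemLp u 2 μ
    have hu_meas : AEStronglyMeasurable u μ :=
      Measurable.aestronglyMeasurable (by measurability : Measurable fun t : ℝ => t ^ (-(a/2)))
    have hu2int : Integrable (fun t => u t ^ 2) μ := by
      have hwa : IntegrableOn (fun t : ℝ => t ^ (-a)) (Ioo 0 y) :=
        ((intervalIntegral.intervalIntegrable_rpow' (a := 0) (b := y)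
          (by linarith : (-1:ℝ) < -a)).1).mono_set Ioo_subset_Ioc_self
      refine hwa.congr ?_
      filter_upwards [haeIoo] with t ht
      rw [hu_def]
      rw [← Real.rpow_natCast (t ^ (-(a/2))) 2, ← Real.rpow_mul ht.1.le]
      norm_num
    have hu : MemLp u 2 μ := (memLp_two_iff_integrable_sq hu_meas).2 hu2int
    -- MemLp v 2 μ
    have hv_meas : AEStronglyMeasurable v μ :=
      ((hg'c.abs).aestronglyMeasurable).mul
        (Measurable.aestronglyMeasurable (by measurability))
    have hv2int : Integrable (fun t => v t ^ 2) μ := by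
      have : IntegrableOn (fun t : ℝ => (deriv g t) ^ 2 * t ^ a) (Ioo 0 y) :=
        integrableOn_cont_mul_rpow ha1 (hg'c.pow 2) hy0
      refine this.congr ?_
      filter_upwards [haeIoo] with t ht
      rw [hv_def, mul_pow, sq_abs, ← Real.rpow_natCast (t ^ (a/2)) 2, ← Real.rpow_mul ht.1.le]
      norm_num
    have hv : MemLp v 2 μ := (memLp_two_iff_integrable_sq hv_meas).2 hv2int
    have hcs := sq_integral_mul_le hu hv
    -- rewrite ∫ ‖u‖‖v‖ as ∫ |deriv g|
    have habs_eq : ∫ t, ‖u t‖ * ‖v t‖ ∂μ = ∫ t in Ioo (0:ℝ) y, |deriv g t| := by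
      refine integral_congr_ae ?_
      filter_upwards [haeIoo] with t ht
      have ht0 : (0:ℝ) < t := ht.1
      have h1 : (0:ℝ) ≤ u t := Real.rpow_nonneg ht0.le _
      have h2 : (0:ℝ) ≤ v t := mul_nonneg (abs_nonneg _) (Real.rpow_nonneg ht0.le _)
      rw [Real.norm_eq_abs, Real.norm_eq_abs, abs_of_nonneg h1, abs_of_nonneg h2,
        hu_def, hv_def]
      have : t ^ (-(a/2)) * (|deriv g t| * t ^ (a/2)) =
          |deriv g t| * (t ^ (-(a/2)) * t ^ (a/2)) := by ring
      rw [this, ← Real.rpow_add ht0]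
      norm_num
    -- values of the two square integrals
    have hval_u : ∫ t, u t ^ 2 ∂μ = y ^ (1-a) / (1-a) := by
      have : ∫ t, u t ^ 2 ∂μ = ∫ t in Ioo (0:ℝ) y, t ^ (-a) := by
        refine integral_congr_ae ?_
        filter_upwards [haeIoo] with t ht
        rw [hu_def, ← Real.rpow_natCast (t ^ (-(a/2))) 2, ← Real.rpow_mul ht.1.le]
        norm_num
      rw [this, integral_Ioo_rpow (by linarith) hy0, show -a+1 = 1-a by ring]
    have hval_v : ∫ t, v t ^ 2 ∂μ ≤ G := by
      have heq : ∫ t, v t ^ 2 ∂μ = ∫ t in Ioo (0:ℝ) y, (deriv g t) ^ 2 * t ^ a := by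
        refine integral_congr_ae ?_
        filter_upwards [haeIoo] with t ht
        rw [hv_def, mul_pow, sq_abs, ← Real.rpow_natCast (t ^ (a/2)) 2, ← Real.rpow_mul ht.1.le]
        norm_num
      rw [heq, hGdef]
      refine setIntegral_mono_set hGint ?_ ?_
      · filter_upwards [ae_restrict_mem measurableSet_Ioo] with t ht
        exact mul_nonneg (sq_nonneg _) (Real.rpow_nonneg ht.1.le _)
      · exact (Ioo_subset_Ioo_right hy.2.le).eventuallyLE
    -- |∫₀^y deriv g| bound
    have hBd : |∫ t in (0:ℝ)..y, deriv g t| ≤ ∫ t in Ioo (0:ℝ) y, |deriv g t| := by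
      rw [intervalIntegral.integral_of_le hy0.le, integral_Ioc_eq_integral_Ioo]
      simpa [Real.norm_eq_abs] using
        MeasureTheory.norm_integral_le_integral_norm
          (μ := volume.restrict (Ioo (0:ℝ) y)) (deriv g)
    have hIabs0 : (0:ℝ) ≤ ∫ t in Ioo (0:ℝ) y, |deriv g t| :=
      setIntegral_nonneg measurableSet_Ioo fun t _ => abs_nonneg _
    have hsq : (∫ t in (0:ℝ)..y, deriv g t) ^ 2 ≤ y ^ (1-a) / (1-a) * G := by
      calc (∫ t in (0:ℝ)..y, deriv g t) ^ 2
          = |∫ t in (0:ℝ)..y, deriv g t| ^ 2 := (sq_abs _).symm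
        _ ≤ (∫ t in Ioo (0:ℝ) y, |deriv g t|) ^ 2 := pow_le_pow_left₀ (abs_nonneg _) hBd 2
        _ = (∫ t, ‖u t‖ * ‖v t‖ ∂μ) ^ 2 := by rw [habs_eq]
        _ ≤ (∫ t, u t ^ 2 ∂μ) * (∫ t, v t ^ 2 ∂μ) := hcs
        _ ≤ y ^ (1-a) / (1-a) * G := by
            rw [hval_u]
            exact mul_le_mul_of_nonneg_left hval_v (by positivity)
    have hg0 : g 0 = g y - ∫ t in (0:ℝ)..y, deriv g t := by rw [hftc]; ring
    rw [hg0]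
    have e3 : 2/(1-a)*y^(1-a)*G = 2*(y^(1-a)/(1-a)*G) := by ring
    rw [e3]
    nlinarith [sq_nonneg (g y + ∫ t in (0:ℝ)..y, deriv g t), hsq]
  -- integrate the key estimate against y^a on (0, δ)
  set I1 := ∫ y in Ioo (0:ℝ) δ, g y ^ 2 * y ^ a with hI1def
  have hI1int : IntegrableOn (fun y : ℝ => g y ^ 2 * y ^ a) (Ioo 0 δ) :=
    integrableOn_cont_mul_rpow ha1 (hgc.pow 2) hδ
  have hI10 : 0 ≤ I1 := setIntegral_nonneg measurableSet_Ioo fun t ht =>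
    mul_nonneg (sq_nonneg _) (Real.rpow_nonneg ht.1.le _)
  have hLint : IntegrableOn (fun y : ℝ => g 0 ^ 2 * y ^ a) (Ioo 0 δ) :=
    integrableOn_cont_mul_rpow ha1 continuous_const hδ
  have hRint1 : IntegrableOn (fun y : ℝ => 2 * g y ^ 2 * y ^ a) (Ioo 0 δ) :=
    integrableOn_cont_mul_rpow ha1 (continuous_const.mul (hgc.pow 2)) hδ
  have hRint2 : IntegrableOn (fun y : ℝ => (2/(1-a)) * G * (y ^ (1-a) * y ^ a)) (Ioo 0 δ) := by
    have hid : IntegrableOn (fun y : ℝ => (2/(1-a)) * G * y ^ (1:ℝ)) (Ioo 0 δ) :=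
      (integrableOn_cont_mul_rpow (by norm_num) (continuous_const (y := (2/(1-a)) * G)) hδ)
    refine hid.congr ?_
    filter_upwards [ae_restrict_mem measurableSet_Ioo] with t ht
    rw [← Real.rpow_add ht.1]
    norm_num
  have hmono : ∫ y in Ioo (0:ℝ) δ, g 0 ^ 2 * y ^ a
      ≤ ∫ y in Ioo (0:ℝ) δ, (2 * g y ^ 2 * y ^ a + (2/(1-a)) * G * (y ^ (1-a) * y ^ a)) := by
    refine setIntegral_mono_on hLint (hRint1.add hRint2) measurableSet_Ioo ?_
    intro y hy
    have := mul_le_mul_of_nonneg_right (key y hy) (Real.rpow_nonneg hy.1.le a)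
    calc g 0 ^ 2 * y ^ a ≤ (2 * g y ^ 2 + (2/(1-a)) * y ^ (1-a) * G) * y ^ a := this
      _ = 2 * g y ^ 2 * y ^ a + (2/(1-a)) * G * (y ^ (1-a) * y ^ a) := by ring
  -- compute both sides
  have hL : ∫ y in Ioo (0:ℝ) δ, g 0 ^ 2 * y ^ a = g 0 ^ 2 * (δ ^ (a+1) / (a+1)) := by
    rw [integral_const_mul, integral_Ioo_rpow ha1 hδ]
  have hy1 : ∫ y in Ioo (0:ℝ) δ, (y:ℝ) ^ (1-a) * y ^ a = δ ^ ((1:ℝ)+1) / ((1:ℝ)+1) := by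
    have : ∫ y in Ioo (0:ℝ) δ, (y:ℝ) ^ (1-a) * y ^ a = ∫ y in Ioo (0:ℝ) δ, (y:ℝ) ^ (1:ℝ) := by
      refine integral_congr_ae ?_
      filter_upwards [ae_restrict_mem measurableSet_Ioo] with t ht
      rw [← Real.rpow_add ht.1]; norm_num
    rw [this, integral_Ioo_rpow (by norm_num) hδ]
  have hR : ∫ y in Ioo (0:ℝ) δ, (2 * g y ^ 2 * y ^ a + (2/(1-a)) * G * (y ^ (1-a) * y ^ a))
      = 2 * I1 + (2/(1-a)) * G * (δ ^ ((1:ℝ)+1) / 2) := by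
    rw [integral_add hRint1 hRint2, hI1def]
    have e1 : ∫ y in Ioo (0:ℝ) δ, 2 * g y ^ 2 * y ^ a = 2 * ∫ y in Ioo (0:ℝ) δ, g y ^ 2 * y ^ a := by
      rw [← integral_const_mul]
      refine integral_congr_ae (Filter.Eventually.of_forall fun t => by ring)
    have e2 : ∫ y in Ioo (0:ℝ) δ, (2/(1-a)) * G * (y ^ (1-a) * y ^ a)
        = (2/(1-a)) * G * (δ ^ ((1:ℝ)+1) / 2) := by
      rw [integral_const_mul, hy1]; norm_num
    rw [e1, e2]
  rw [hL, hR] at hmono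
  -- final algebra
  have hP : (0:ℝ) < δ ^ (a+1) := Real.rpow_pos_of_pos hδ _
  have hA : δ ^ (-(1+a)) = (δ ^ (a+1))⁻¹ := by
    rw [show -(1+a) = -(a+1) by ring, Real.rpow_neg hδ.le]
  have hB : δ ^ (1-a) = δ ^ ((1:ℝ)+1) * (δ ^ (a+1))⁻¹ := by
    rw [← Real.rpow_neg hδ.le, ← Real.rpow_add hδ, show (1:ℝ)+1+-(a+1) = 1-a by ring]
  have hstep : g 0 ^ 2
      ≤ (2 * I1 + (2/(1-a)) * G * (δ ^ ((1:ℝ)+1) / 2)) / (δ ^ (a+1) / (a+1)) :=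
    (le_div_iff₀ (div_pos hP (by linarith))).2 hmono
  rw [hA, hB]
  refine le_trans hstep (le_of_eq ?_)
  field_simp
  ring

set_option maxHeartbeats 1000000 in
/-- **Trace inequality.** There is a constant `C₀ = C₀(n,a) > 0` such that for every
smooth compactly supported function `f` on the (closed) upper half-space and every `σ > 1`,
`∫_{ℝⁿ} f(x,0)² dx ≤ C₀ (σ^{1+a} ∫_{ℝ^{n+1}_+} f² y^a dX + σ^{a−1} ∫_{ℝ^{n+1}_+} |∇f|² y^a dX)`. -/
theorem trace_inequality (n : ℕ) (hn : 1 ≤ n) (a : ℝ) (ha1 : -1 < a) (ha2 : a < 1) :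
    ∃ C₀ : ℝ, 0 < C₀ ∧
      ∀ (f : (Fin (n+1) → ℝ) → ℝ), ContDiff ℝ (⊤ : ℕ∞) f → HasCompactSupport f →
        ∀ σ : ℝ, 1 < σ →
          (∫ x : Fin n → ℝ, f (Fin.snoc x 0) ^ 2)
            ≤ C₀ * (σ ^ (1 + a) *
                (∫ X in {X : Fin (n+1) → ℝ | 0 < X (Fin.last n)},
                    f X ^ 2 * X (Fin.last n) ^ a)
              + σ ^ (a - 1) *
                (∫ X in {X : Fin (n+1) → ℝ | 0 < X (Fin.last n)},
                    (∑ i, pd i f X ^ 2) * X (Fin.last n) ^ a)) := by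
  have h1a : (0:ℝ) < 1 + a := by linarith
  have h1a' : (0:ℝ) < 1 - a := by linarith
  refine ⟨2*(1+a) + (1+a)/(1-a), by positivity, ?_⟩
  intro f hf hsupp σ hσ
  have hσ0 : (0:ℝ) < σ := by linarith
  have hδ : (0:ℝ) < σ⁻¹ := by positivity
  have hfc : Continuous f := hf.continuous
  -- continuity of the snoc maps
  have hsnocP : Continuous (fun p : ℝ × (Fin n → ℝ) => (Fin.snoc p.2 p.1 : Fin (n+1) → ℝ)) := by
    apply continuous_pi
    intro i
    refine Fin.lastCases ?_ (fun j => ?_) i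
    · simpa [Fin.snoc_last] using (continuous_fst : Continuous fun p : ℝ × (Fin n → ℝ) => p.1)
    · simpa [Fin.snoc_castSucc, Function.comp_def] using (continuous_apply j).comp
        (continuous_snd : Continuous fun p : ℝ × (Fin n → ℝ) => p.2)
  have hsnoc0 : Continuous (fun x : Fin n → ℝ => (Fin.snoc x (0:ℝ) : Fin (n+1) → ℝ)) :=
    hsnocP.comp (continuous_const.prodMk continuous_id)
  have hsnocx : ∀ x : Fin n → ℝ, Continuous (fun y : ℝ => (Fin.snoc x y : Fin (n+1) → ℝ)) :=
    fun x => hsnocP.comp (continuous_id.prodMk continuous_const)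
  have hpdc : ∀ i, Continuous (pd i f) :=
    fun i => (hf.continuous_fderiv (by simp)).clm_apply continuous_const
  -- snoc as an affine map in the last coordinate
  have haff : ∀ (x : Fin n → ℝ) (y : ℝ), (Fin.snoc x y : Fin (n+1) → ℝ)
      = (Fin.snoc x 0 : Fin (n+1) → ℝ) + y • (Pi.single (Fin.last n) (1:ℝ) : Fin (n+1) → ℝ) := by
    intro x y
    funext i
    refine Fin.lastCases ?_ (fun j => ?_) i
    · simp [Fin.snoc_last]
    · simp [Fin.snoc_castSucc, Pi.single_eq_of_ne (Fin.castSucc_lt_last j).ne]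
  -- smoothness of the slices
  have hgx : ∀ x : Fin n → ℝ, ContDiff ℝ (⊤ : ℕ∞) (fun y : ℝ => f (Fin.snoc x y)) := by
    intro x
    have he : (fun y : ℝ => f (Fin.snoc x y)) = (fun y : ℝ => f
        ((Fin.snoc x 0 : Fin (n+1) → ℝ) + y • (Pi.single (Fin.last n) (1:ℝ) : Fin (n+1) → ℝ))) := by
      funext y; rw [haff x y]
    rw [he]
    exact hf.comp (contDiff_const.add (contDiff_id.smul contDiff_const))
  have hderiv : ∀ (x : Fin n → ℝ) (y : ℝ),
      deriv (fun y : ℝ => f (Fin.snoc x y)) y = pd (Fin.last n) f (Fin.snoc x y) := by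
    intro x y
    have h1 : HasDerivAt (fun z : ℝ => (Fin.snoc x 0 : Fin (n+1) → ℝ)
        + z • (Pi.single (Fin.last n) (1:ℝ) : Fin (n+1) → ℝ))
        (Pi.single (Fin.last n) (1:ℝ) : Fin (n+1) → ℝ) y := by
      simpa using ((hasDerivAt_id y).smul_const
        (Pi.single (Fin.last n) (1:ℝ) : Fin (n+1) → ℝ)).const_add (Fin.snoc x 0 : Fin (n+1) → ℝ)
    have hg' : HasDerivAt (fun z : ℝ => (Fin.snoc x z : Fin (n+1) → ℝ))
        (Pi.single (Fin.last n) (1:ℝ) : Fin (n+1) → ℝ) y := by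
      have hfun : (fun z : ℝ => (Fin.snoc x z : Fin (n+1) → ℝ)) = fun z =>
          (Fin.snoc x 0 : Fin (n+1) → ℝ) + z • (Pi.single (Fin.last n) (1:ℝ) : Fin (n+1) → ℝ) :=
        funext (haff x)
      rw [hfun]; exact h1
    have h2 := (((hf.differentiable (by simp)) (Fin.snoc x y)).hasFDerivAt).comp_hasDerivAt y hg'
    have h3 := h2.deriv
    simpa [Function.comp_def, pd] using h3
  -- support radius
  obtain ⟨R, hR0, hRsub⟩ := hsupp.isBounded.subset_closedBall_lt 0 0
  have hnormle : ∀ X : Fin (n+1) → ℝ, X ∈ tsupport f → ‖X‖ ≤ R := by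
    intro X hX
    have := hRsub hX
    rwa [Metric.mem_closedBall, dist_zero_right] at this
  -- vanishing results for large y
  have hsnoc_norm : ∀ (x : Fin n → ℝ) (y : ℝ), 0 < y → R < y →
      (Fin.snoc x y : Fin (n+1) → ℝ) ∉ tsupport f := by
    intro x y hy0 hy hmem
    have h1 : ‖(Fin.snoc x y : Fin (n+1) → ℝ) (Fin.last n)‖ ≤ ‖(Fin.snoc x y : Fin (n+1) → ℝ)‖ :=
      norm_le_pi_norm _ _
    rw [Fin.snoc_last] at h1
    have : y ≤ R := le_trans (by simpa [Real.norm_eq_abs, abs_of_pos hy0] using h1)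
      (hnormle _ hmem)
    linarith
  -- support of the gradient-square sum
  have hsub2 : Function.support (fun X => ∑ i, pd i f X ^ 2) ⊆ tsupport f := by
    intro X hX
    by_contra hnot
    apply hX
    have h0 : fderiv ℝ f X = 0 :=
      Function.notMem_support.1 (fun hmem => hnot (support_fderiv_subset ℝ hmem))
    simp [pd, h0]
  -- compact supports & bounds
  have hcs2 : HasCompactSupport (fun X : Fin (n+1) → ℝ => f X ^ 2) := by
    simpa [Function.comp_def] using hsupp.comp_left (g := fun t : ℝ => t ^ 2) (by norm_num)
  have hsumc : Continuous (fun X : Fin (n+1) → ℝ => ∑ i, pd i f X ^ 2) :=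
    continuous_finset_sum _ fun i _ => (hpdc i).pow 2
  have hcsum : HasCompactSupport (fun X : Fin (n+1) → ℝ => ∑ i, pd i f X ^ 2) :=
    IsCompact.of_isClosed_subset hsupp (isClosed_closure)
      (closure_minimal hsub2 (isClosed_tsupport f))
  obtain ⟨M1, hM1⟩ := (hfc.pow 2).bounded_above_of_compact_support hcs2
  have hM1' : ∀ X, f X ^ 2 ≤ M1 :=
    fun X => le_trans (le_abs_self _) (by simpa [Real.norm_eq_abs] using hM1 X)
  obtain ⟨M2, hM2⟩ := hsumc.bounded_above_of_compact_support hcsum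
  have hM2' : ∀ X, (∑ i, pd i f X ^ 2) ≤ M2 :=
    fun X => le_trans (le_abs_self _) (by simpa [Real.norm_eq_abs] using hM2 X)
  -- per-slice integrability on (0,∞)
  have hIoiInt : ∀ h : ℝ → ℝ, Continuous h → (∀ y, 0 < y → R < y → h y = 0) →
      IntegrableOn (fun y => h y * y ^ a) (Ioi (0:ℝ)) := by
    intro h hc hz
    have hb1 : IntegrableOn (fun y => h y * y ^ a) (Ioo 0 (R+1)) :=
      integrableOn_cont_mul_rpow ha1 hc (by linarith)
    have hb2 : IntegrableOn (fun y => h y * y ^ a) (Ici (R+1)) := by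
      refine (integrableOn_zero).congr_fun ?_ measurableSet_Ici
      intro y hy
      have hy1 : R < y := by have := mem_Ici.1 hy; linarith
      show (0:ℝ) = h y * y ^ a
      rw [hz y (by linarith) hy1, zero_mul]
    refine (hb1.union hb2).mono_set ?_
    intro y hy
    rcases lt_or_ge y (R+1) with h' | h'
    · exact Or.inl ⟨hy, h'⟩
    · exact Or.inr h'
  have hvan1 : ∀ (x : Fin n → ℝ) (y : ℝ), 0 < y → R < y → f (Fin.snoc x y) ^ 2 = 0 := by
    intro x y hy0 hy
    rw [image_eq_zero_of_notMem_tsupport (hsnoc_norm x y hy0 hy)]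
    norm_num
  have hvan2 : ∀ (x : Fin n → ℝ) (y : ℝ), 0 < y → R < y →
      (∑ i, pd i f (Fin.snoc x y) ^ 2) = 0 := by
    intro x y hy0 hy
    by_contra hne
    exact hsnoc_norm x y hy0 hy (hsub2 (Function.mem_support.2 hne))
  have hJ1int : ∀ x : Fin n → ℝ,
      IntegrableOn (fun y => f (Fin.snoc x y) ^ 2 * y ^ a) (Ioi (0:ℝ)) :=
    fun x => hIoiInt _ ((hfc.comp (hsnocx x)).pow 2) (hvan1 x)
  have hJ2int : ∀ x : Fin n → ℝ,
      IntegrableOn (fun y => (∑ i, pd i f (Fin.snoc x y) ^ 2) * y ^ a) (Ioi (0:ℝ)) :=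
    fun x => hIoiInt _ (continuous_finset_sum _ fun i _ => ((hpdc i).comp (hsnocx x)).pow 2)
      (hvan2 x)
  -- pointwise (in x) trace estimate
  have hptwise : ∀ x : Fin n → ℝ, f (Fin.snoc x 0) ^ 2 ≤
      (2*(1+a)) * σ ^ (1+a) * (∫ y in Ioi (0:ℝ), f (Fin.snoc x y) ^ 2 * y ^ a)
      + ((1+a)/(1-a)) * σ ^ (a-1) *
        (∫ y in Ioi (0:ℝ), (∑ i, pd i f (Fin.snoc x y) ^ 2) * y ^ a) := by
    intro x
    have h0 := oneD ha1 ha2 (hgx x) hδ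
    have hrw1 : (σ⁻¹ : ℝ) ^ (-(1+a)) = σ ^ (1+a) := by
      rw [Real.inv_rpow hσ0.le, ← Real.rpow_neg hσ0.le, neg_neg]
    have hrw2 : (σ⁻¹ : ℝ) ^ (1-a) = σ ^ (a-1) := by
      rw [Real.inv_rpow hσ0.le, ← Real.rpow_neg hσ0.le, show -(1-a) = a-1 by ring]
    rw [hrw1, hrw2] at h0
    refine le_trans h0 (add_le_add ?_ ?_)
    · refine mul_le_mul_of_nonneg_left ?_
        (mul_nonneg (by linarith) (Real.rpow_nonneg hσ0.le _))
      refine setIntegral_mono_set (hJ1int x) ?_ (Ioo_subset_Ioi_self.eventuallyLE)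
      filter_upwards [ae_restrict_mem measurableSet_Ioi] with y hy
      exact mul_nonneg (sq_nonneg _) (Real.rpow_nonneg (le_of_lt hy) _)
    · refine mul_le_mul_of_nonneg_left ?_
        (mul_nonneg (by positivity) (Real.rpow_nonneg hσ0.le _))
      calc ∫ y in Ioo (0:ℝ) σ⁻¹, (deriv (fun y => f (Fin.snoc x y)) y) ^ 2 * y ^ a
          ≤ ∫ y in Ioo (0:ℝ) σ⁻¹, (∑ i, pd i f (Fin.snoc x y) ^ 2) * y ^ a := by
            refine setIntegral_mono_on
              (integrableOn_cont_mul_rpow ha1 (((hgx x).continuous_deriv (by simp)).pow 2) hδ)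
              (integrableOn_cont_mul_rpow ha1
                (continuous_finset_sum _ fun i _ => ((hpdc i).comp (hsnocx x)).pow 2) hδ)
              measurableSet_Ioo ?_
            intro y hy
            refine mul_le_mul_of_nonneg_right ?_ (Real.rpow_nonneg hy.1.le _)
            rw [hderiv x y]
            exact Finset.single_le_sum (f := fun i => pd i f (Fin.snoc x y) ^ 2)
              (fun i _ => sq_nonneg _) (Finset.mem_univ (Fin.last n))
        _ ≤ ∫ y in Ioi (0:ℝ), (∑ i, pd i f (Fin.snoc x y) ^ 2) * y ^ a := by
            refine setIntegral_mono_set (hJ2int x) ?_ (Ioo_subset_Ioi_self.eventuallyLE)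
            filter_upwards [ae_restrict_mem measurableSet_Ioi] with y hy
            exact mul_nonneg (Finset.sum_nonneg fun i _ => sq_nonneg _)
              (Real.rpow_nonneg (le_of_lt hy) _)
  -- the measurable equivalence and change of variables
  set eqv := MeasurableEquiv.piFinSuccAbove (fun _ : Fin (n+1) => ℝ) (Fin.last n) with heqv
  have hsymm : ∀ p : ℝ × (Fin n → ℝ), eqv.symm p = Fin.snoc p.2 p.1 := by
    intro p
    simp [heqv, MeasurableEquiv.piFinSuccAbove, Fin.snocEquiv]
  have himg : eqv.symm '' ((Ioi (0:ℝ)) ×ˢ (univ : Set (Fin n → ℝ)))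
      = {X : Fin (n+1) → ℝ | 0 < X (Fin.last n)} := by
    ext X
    constructor
    · rintro ⟨p, hp, rfl⟩
      simpa [heqv, MeasurableEquiv.piFinSuccAbove, Fin.snocEquiv] using hp.1
    · intro hX
      refine ⟨eqv X, ?_, eqv.symm_apply_apply X⟩
      simpa [heqv, MeasurableEquiv.piFinSuccAbove, Fin.snocEquiv] using hX
  have hpres : MeasurePreserving eqv.symm volume volume :=
    (MeasureTheory.volume_preserving_piFinSuccAbove (fun _ : Fin (n+1) => ℝ) (Fin.last n)).symm
  have hchg : ∀ F : (Fin (n+1) → ℝ) → ℝ,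
      ∫ X in {X : Fin (n+1) → ℝ | 0 < X (Fin.last n)}, F X
        = ∫ p in (Ioi (0:ℝ)) ×ˢ (univ : Set (Fin n → ℝ)), F (Fin.snoc p.2 p.1)
            ∂((volume : Measure ℝ).prod (volume : Measure (Fin n → ℝ))) := by
    intro F
    rw [← himg, hpres.setIntegral_image_emb eqv.symm.measurableEmbedding, ← Measure.volume_eq_prod]
    exact setIntegral_congr_ae ((measurableSet_Ioi.prod MeasurableSet.univ))
      (Filter.Eventually.of_forall fun p _ => by rw [hsymm p])
  have hrestrict : ((volume : Measure ℝ).prod (volume : Measure (Fin n → ℝ))).restrict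
        ((Ioi (0:ℝ)) ×ˢ (univ : Set (Fin n → ℝ)))
      = ((volume : Measure ℝ).restrict (Ioi (0:ℝ))).prod (volume : Measure (Fin n → ℝ)) := by
    rw [← Measure.prod_restrict, Measure.restrict_univ]
  -- integrability on the product space
  have hprodInt : ∀ (h : (Fin (n+1) → ℝ) → ℝ) (M : ℝ), Continuous h →
      (Function.support h ⊆ tsupport f) → (∀ X, 0 ≤ h X) → (∀ X, h X ≤ M) →
      Integrable (fun p : ℝ × (Fin n → ℝ) => h (Fin.snoc p.2 p.1) * p.1 ^ a)
        (((volume : Measure ℝ).restrict (Ioi (0:ℝ))).prod (volume : Measure (Fin n → ℝ))) := by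
    intro h M hc hsub hnn hbd
    have hmeas : AEStronglyMeasurable (fun p : ℝ × (Fin n → ℝ) => h (Fin.snoc p.2 p.1) * p.1 ^ a)
        (((volume : Measure ℝ).restrict (Ioi (0:ℝ))).prod (volume : Measure (Fin n → ℝ))) := by
      refine ((hc.comp hsnocP).aestronglyMeasurable).mul ?_
      exact ((my_measurable_rpow_const a).comp measurable_fst).aestronglyMeasurable
    have hDf1 : Integrable (Set.indicator (Ioc (0:ℝ) R) (fun y => M * y ^ a))
        ((volume : Measure ℝ).restrict (Ioi (0:ℝ))) := by
      have hio : IntegrableOn (fun y : ℝ => M * y ^ a) (Ioc 0 R) volume :=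
        (intervalIntegral.intervalIntegrable_rpow' (a := 0) (b := R) ha1).1.const_mul M
      exact (hio.integrable_indicator measurableSet_Ioc).restrict
    have hDf2 : Integrable (Set.indicator (Metric.closedBall (0 : Fin n → ℝ) R) (fun _ => (1:ℝ)))
        (volume : Measure (Fin n → ℝ)) := by
      refine IntegrableOn.integrable_indicator ?_ measurableSet_closedBall
      exact (integrableOn_const_iff (by simp)).2 (Or.inr (measure_closedBall_lt_top))
    refine (hDf1.mul_prod hDf2).mono' hmeas ?_
    have hae : ∀ᵐ p ∂(((volume : Measure ℝ).restrict (Ioi (0:ℝ))).prod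
        (volume : Measure (Fin n → ℝ))), p.1 ∈ Ioi (0:ℝ) := by
      rw [← hrestrict]
      filter_upwards [ae_restrict_mem (measurableSet_Ioi.prod MeasurableSet.univ)] with p hp
      exact hp.1
    filter_upwards [hae] with p hp
    have hM0 : 0 ≤ M := le_trans (hnn (Fin.snoc p.2 p.1)) (hbd _)
    by_cases hmem : (Fin.snoc p.2 p.1 : Fin (n+1) → ℝ) ∈ tsupport f
    · have hnorm : ‖(Fin.snoc p.2 p.1 : Fin (n+1) → ℝ)‖ ≤ R := hnormle _ hmem
      have hy : p.1 ≤ R := by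
        have h1 : ‖(Fin.snoc p.2 p.1 : Fin (n+1) → ℝ) (Fin.last n)‖
            ≤ ‖(Fin.snoc p.2 p.1 : Fin (n+1) → ℝ)‖ := norm_le_pi_norm _ _
        rw [Fin.snoc_last] at h1
        calc p.1 ≤ ‖p.1‖ := le_abs_self _
          _ ≤ R := le_trans h1 hnorm
      have hx : p.2 ∈ Metric.closedBall (0 : Fin n → ℝ) R := by
        rw [Metric.mem_closedBall, dist_zero_right,
          pi_norm_le_iff_of_nonneg (le_trans (norm_nonneg _) hnorm)]
        intro j
        calc ‖p.2 j‖ = ‖(Fin.snoc p.2 p.1 : Fin (n+1) → ℝ) (Fin.castSucc j)‖ := by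
              rw [Fin.snoc_castSucc]
          _ ≤ ‖(Fin.snoc p.2 p.1 : Fin (n+1) → ℝ)‖ := norm_le_pi_norm _ _
          _ ≤ R := hnorm
      rw [Set.indicator_of_mem (show p.1 ∈ Ioc (0:ℝ) R from ⟨hp, hy⟩), Set.indicator_of_mem hx, mul_one,
        Real.norm_eq_abs, abs_of_nonneg (mul_nonneg (hnn _) (Real.rpow_nonneg (le_of_lt hp) _))]
      exact mul_le_mul_of_nonneg_right (hbd _) (Real.rpow_nonneg (le_of_lt hp) _)
    · have h0 : h (Fin.snoc p.2 p.1) = 0 :=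
        Function.notMem_support.1 (fun hm => hmem (hsub hm))
      rw [h0, zero_mul, norm_zero]
      refine mul_nonneg (Set.indicator_nonneg (fun y hy => ?_) _)
        (Set.indicator_nonneg (fun _ _ => zero_le_one) _)
      exact mul_nonneg hM0 (Real.rpow_nonneg hy.1.le _)
  have hP := hprodInt (fun X => f X ^ 2) M1 (hfc.pow 2)
    (fun X hX => subset_closure (by
      refine Function.mem_support.2 (fun h' => Function.mem_support.1 hX ?_)
      rw [show f X = 0 from by nlinarith [Function.mem_support.1 hX, sq_nonneg (f X)]]
      norm_num)) (fun X => sq_nonneg _) hM1'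
  have hQ := hprodInt (fun X => ∑ i, pd i f X ^ 2) M2 hsumc hsub2
    (fun X => Finset.sum_nonneg fun i _ => sq_nonneg _) hM2'
  -- Fubini
  have hfub : ∀ G : ℝ × (Fin n → ℝ) → ℝ,
      Integrable G (((volume : Measure ℝ).restrict (Ioi (0:ℝ))).prod
        (volume : Measure (Fin n → ℝ))) →
      ∫ p in (Ioi (0:ℝ)) ×ˢ (univ : Set (Fin n → ℝ)), G p
          ∂((volume : Measure ℝ).prod (volume : Measure (Fin n → ℝ)))
        = ∫ x : Fin n → ℝ, ∫ y in Ioi (0:ℝ), G (y, x) := by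
    intro G hG
    rw [hrestrict, MeasureTheory.integral_prod _ hG]
    exact MeasureTheory.integral_integral_swap (f := fun y x => G (y, x)) hG
  have hI1eq : (∫ X in {X : Fin (n+1) → ℝ | 0 < X (Fin.last n)}, f X ^ 2 * X (Fin.last n) ^ a)
      = ∫ x : Fin n → ℝ, ∫ y in Ioi (0:ℝ), f (Fin.snoc x y) ^ 2 * y ^ a := by
    rw [hchg (fun X => f X ^ 2 * X (Fin.last n) ^ a)]
    simp only [Fin.snoc_last]
    exact hfub _ hP
  have hI2eq : (∫ X in {X : Fin (n+1) → ℝ | 0 < X (Fin.last n)},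
        (∑ i, pd i f X ^ 2) * X (Fin.last n) ^ a)
      = ∫ x : Fin n → ℝ, ∫ y in Ioi (0:ℝ), (∑ i, pd i f (Fin.snoc x y) ^ 2) * y ^ a := by
    rw [hchg (fun X => (∑ i, pd i f X ^ 2) * X (Fin.last n) ^ a)]
    simp only [Fin.snoc_last]
    exact hfub _ hQ
  -- integrability in x of the inner integrals
  have hJ1 : Integrable (fun x : Fin n → ℝ =>
      ∫ y in Ioi (0:ℝ), f (Fin.snoc x y) ^ 2 * y ^ a) volume := by
    have h := (hP.swap).integral_prod_left
    simpa [Function.comp] using h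
  have hJ2 : Integrable (fun x : Fin n → ℝ =>
      ∫ y in Ioi (0:ℝ), (∑ i, pd i f (Fin.snoc x y) ^ 2) * y ^ a) volume := by
    have h := (hQ.swap).integral_prod_left
    simpa [Function.comp] using h
  -- integrability of the trace term
  let L : (Fin n → ℝ) →ₗ[ℝ] (Fin (n+1) → ℝ) :=
    { toFun := fun x => Fin.snoc x 0
      map_add' := by
        intro x x'
        funext i
        refine Fin.lastCases ?_ (fun j => ?_) i
        · simp
        · simp
      map_smul' := by
        intro c x
        funext i
        refine Fin.lastCases ?_ (fun j => ?_) i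
        · simp
        · simp }
  have hLemb : Topology.IsClosedEmbedding (fun x : Fin n → ℝ =>
      (Fin.snoc x (0:ℝ) : Fin (n+1) → ℝ)) := by
    have hker : LinearMap.ker L = ⊥ := by
      rw [LinearMap.ker_eq_bot]
      intro x x' hxy
      funext j
      have := congr_fun hxy (Fin.castSucc j)
      simpa [L] using this
    exact LinearMap.isClosedEmbedding_of_injective hker
  have hLHSint : Integrable (fun x : Fin n → ℝ => f (Fin.snoc x 0) ^ 2) volume :=
    ((hfc.comp hsnoc0).pow 2).integrable_of_hasCompactSupport
      (hcs2.comp_isClosedEmbedding hLemb)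
  -- nonnegativity of the half-space integrals
  have hSmeas : MeasurableSet {X : Fin (n+1) → ℝ | 0 < X (Fin.last n)} :=
    measurableSet_lt measurable_const (measurable_pi_apply _)
  have hI1nn : 0 ≤ ∫ X in {X : Fin (n+1) → ℝ | 0 < X (Fin.last n)},
      f X ^ 2 * X (Fin.last n) ^ a :=
    setIntegral_nonneg hSmeas fun X hX =>
      mul_nonneg (sq_nonneg _) (Real.rpow_nonneg (le_of_lt hX) _)
  have hI2nn : 0 ≤ ∫ X in {X : Fin (n+1) → ℝ | 0 < X (Fin.last n)},
      (∑ i, pd i f X ^ 2) * X (Fin.last n) ^ a :=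
    setIntegral_nonneg hSmeas fun X hX =>
      mul_nonneg (Finset.sum_nonneg fun i _ => sq_nonneg _) (Real.rpow_nonneg (le_of_lt hX) _)
  -- put everything together
  calc (∫ x : Fin n → ℝ, f (Fin.snoc x 0) ^ 2)
      ≤ ∫ x : Fin n → ℝ,
          ((2*(1+a)) * σ ^ (1+a) * (∫ y in Ioi (0:ℝ), f (Fin.snoc x y) ^ 2 * y ^ a)
          + ((1+a)/(1-a)) * σ ^ (a-1) *
              (∫ y in Ioi (0:ℝ), (∑ i, pd i f (Fin.snoc x y) ^ 2) * y ^ a)) :=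
        integral_mono hLHSint ((hJ1.const_mul _).add (hJ2.const_mul _)) hptwise
    _ = (2*(1+a)) * σ ^ (1+a) *
          (∫ X in {X : Fin (n+1) → ℝ | 0 < X (Fin.last n)}, f X ^ 2 * X (Fin.last n) ^ a)
        + ((1+a)/(1-a)) * σ ^ (a-1) *
          (∫ X in {X : Fin (n+1) → ℝ | 0 < X (Fin.last n)},
            (∑ i, pd i f X ^ 2) * X (Fin.last n) ^ a) := by
        rw [integral_add (hJ1.const_mul _) (hJ2.const_mul _), integral_const_mul,
          integral_const_mul, hI1eq, hI2eq]
    _ ≤ (2*(1+a) + (1+a)/(1-a)) * (σ ^ (1 + a) *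
          (∫ X in {X : Fin (n+1) → ℝ | 0 < X (Fin.last n)}, f X ^ 2 * X (Fin.last n) ^ a)
        + σ ^ (a - 1) *
          (∫ X in {X : Fin (n+1) → ℝ | 0 < X (Fin.last n)},
            (∑ i, pd i f X ^ 2) * X (Fin.last n) ^ a)) := by
        have hA : (0:ℝ) ≤ σ ^ (1+a) *
            (∫ X in {X : Fin (n+1) → ℝ | 0 < X (Fin.last n)}, f X ^ 2 * X (Fin.last n) ^ a) :=
          mul_nonneg (Real.rpow_nonneg hσ0.le _) hI1nn
        have hB : (0:ℝ) ≤ σ ^ (a-1) *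
            (∫ X in {X : Fin (n+1) → ℝ | 0 < X (Fin.last n)},
              (∑ i, pd i f X ^ 2) * X (Fin.last n) ^ a) :=
          mul_nonneg (Real.rpow_nonneg hσ0.le _) hI2nn
        have c1 : (0:ℝ) ≤ (1+a)/(1-a) := le_of_lt (div_pos h1a h1a')
        have c2 : (0:ℝ) ≤ 2*(1+a) := by linarith
        nlinarith [mul_nonneg c1 hA, mul_nonneg c2 hB]
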